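/- arXiv:2404.14035 — 6 statements merged into one kernel-verified Lean document; each statement's English description precedes it below -/
import Mathlib

section
/- For every natural number k ≥ 1, the identity ∑_{m=0}^{k-1} Γ(m+1,k)/m! = e^{-k} · k^k/(k-1)! holds, where Γ(m+1,k) = ∫_k^∞ t^m e^{-t} dt is the upper incomplete gamma function (so that Γ(m+1,k)/m! = e^{-k} ∑_{j=0}^m k^j/j!). -/
/-!
With `S_m(t) = ∑_{j ≤ m} t^j / j!`, the function `-e^{-t} S_m(t)` is an antiderivative of
`t^m e^{-t} / m!` vanishing at infinity, so `Γ(m+1, x) / m! = e^{-x} S_m(x)`. Exchanging the order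
of summation, `∑_{m<n} S_m(x) = ∑_{j<n} (n - j) x^j / j!`; at `x = n` this telescopes to
`n · n^n / n!`, since `(x - j) x^j / j! = g(j+1) - g(j)` with `g(j) = j x^j / j!`.
-/

open MeasureTheory Real Finset Filter Set Topology
open scoped Nat

theorem hasDerivAt_sum_range_pow_div_factorial (m : ℕ) (t : ℝ) :
    HasDerivAt (fun t : ℝ => ∑ j ∈ range (m + 1), t ^ j / j !)
      (∑ j ∈ range m, t ^ j / j !) t := by
  have hterm (j : ℕ) : HasDerivAt (fun t : ℝ => t ^ (j + 1) / (j + 1)!) (t ^ j / j !) t := by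
    refine ((hasDerivAt_pow (j + 1) t).div_const ((j + 1)! : ℝ)).congr_deriv ?_
    rw [Nat.factorial_succ, Nat.cast_mul, Nat.add_sub_cancel]
    field_simp
  simp only [sum_range_succ' _ m, pow_zero, Nat.factorial_zero, Nat.cast_one, div_one]
  exact (HasDerivAt.fun_sum fun j _ => hterm j).add_const _

theorem hasDerivAt_neg_exp_neg_mul_sum_range (m : ℕ) (t : ℝ) :
    HasDerivAt (fun t : ℝ => -(exp (-t) * ∑ j ∈ range (m + 1), t ^ j / j !))
      (t ^ m * exp (-t) / m !) t := by
  have hexp : HasDerivAt (fun t : ℝ => exp (-t)) (-exp (-t)) t := by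
    simpa using (hasDerivAt_neg' t).exp
  refine (hexp.mul (hasDerivAt_sum_range_pow_div_factorial m t)).neg.congr_deriv ?_
  rw [sum_range_succ]
  ring

theorem tendsto_exp_neg_mul_sum_range_atTop (m : ℕ) :
    Tendsto (fun t : ℝ => exp (-t) * ∑ j ∈ range (m + 1), t ^ j / j !) atTop (𝓝 0) := by
  simp_rw [mul_sum]
  simpa using tendsto_finsetSum (range (m + 1)) fun j _ =>
    ((tendsto_pow_mul_exp_neg_atTop_nhds_zero j).div_const (j ! : ℝ)).congr fun t => by ring

theorem integral_Ioi_pow_mul_exp_neg_div_factorial (m : ℕ) {x : ℝ} (hx : 0 ≤ x) :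
    (∫ t in Ioi x, t ^ m * exp (-t)) / m ! = exp (-x) * ∑ j ∈ range (m + 1), x ^ j / j ! := by
  have hderiv := fun t (_ : t ∈ Ici x) => hasDerivAt_neg_exp_neg_mul_sum_range m t
  have hlim := (tendsto_exp_neg_mul_sum_range_atTop m).neg
  rw [neg_zero] at hlim
  have hint : IntegrableOn (fun t => t ^ m * exp (-t) / m !) (Ioi x) :=
    integrableOn_Ioi_deriv_of_nonneg (hderiv x self_mem_Ici).continuousAt.continuousWithinAt
      (fun t ht => hderiv t (Ioi_subset_Ici_self ht))
      (fun t ht => by have := hx.trans ht.le; positivity) hlim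
  rw [← integral_div, integral_Ioi_of_hasDerivAt_of_tendsto' hderiv hint hlim]
  ring

theorem sum_range_sum_range_succ {R : Type*} [CommRing R] (f : ℕ → R) (n : ℕ) :
    ∑ m ∈ range n, ∑ j ∈ range (m + 1), f j = ∑ j ∈ range n, ((n : R) - j) * f j := by
  induction n with
  | zero => simp
  | succ n ih =>
    rw [sum_range_succ, ih, sum_range_succ _ n, sum_range_succ _ n]
    simp only [Nat.cast_succ, add_sub_right_comm _ (1 : R), add_mul, one_mul, sum_add_distrib]
    ring

theorem sum_range_sub_mul_pow_div_factorial (x : ℝ) (n : ℕ) :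
    ∑ j ∈ range n, (x - j) * (x ^ j / j !) = n * x ^ n / n ! := by
  have htelescope : ∀ j ∈ range n,
      (x - j) * (x ^ j / j !) = (j + 1 : ℕ) * x ^ (j + 1) / (j + 1)! - j * x ^ j / j ! := by
    intro j _
    rw [Nat.factorial_succ, Nat.cast_mul]
    field_simp
    ring
  rw [sum_congr rfl htelescope, sum_range_sub (fun j => (j : ℝ) * x ^ j / j !)]
  simp

/-- For every natural number `k ≥ 1`,
`∑_{m=0}^{k-1} Γ(m+1,k)/m! = e^{-k} · k^k/(k-1)!`, where
`Γ(m+1,k) = ∫_k^∞ t^m e^{-t} dt` is the upper incomplete gamma function. -/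
theorem sum_upper_incomplete_gamma (k : ℕ) (hk : 1 ≤ k) :
    ∑ m ∈ Finset.range k,
        (∫ t in Set.Ioi (k : ℝ), t ^ m * Real.exp (-t)) / (Nat.factorial m) =
      Real.exp (-(k : ℝ)) * (k : ℝ) ^ k / (Nat.factorial (k - 1)) := by
  simp_rw [integral_Ioi_pow_mul_exp_neg_div_factorial _ k.cast_nonneg, ← mul_sum,
    sum_range_sum_range_succ, sum_range_sub_mul_pow_div_factorial,
    ← Nat.mul_factorial_pred (Nat.one_le_iff_ne_zero.mp hk), Nat.cast_mul]
  have hk0 : (k : ℝ) ≠ 0 := by positivity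
  field_simp
end

section
/- Let (g_m)_{m∈ℕ} be a strictly decreasing bounded sequence of positive reals. Then the function f(s) = e^{-s} ∑_{m=0}^∞ (g_m/m!) s^m is strictly decreasing on (0,∞), since its derivative equals e^{-s} ∑_{m=0}^∞ ((g_{m+1} - g_m)/m!) s^m < 0 for all s > 0. -/
/-!
If `N` is a Poisson variable with parameter `s`, then `f(s) = 𝔼 g(N)`. Differentiating the
exponential series termwise gives `f'(s) = 𝔼 (g(N + 1) - g(N))`, a mean of negative numbers.
Termwise differentiation and all the rearrangements are justified by domination with the
exponential series, since `0 < g m ≤ g 0`.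
-/

open scoped Nat

section ExpTypeSeries

variable {𝕜 : Type*} [RCLike 𝕜] {a : ℕ → 𝕜} {C : ℝ}

lemma summable_div_factorial_mul_pow (ha : ∀ n, ‖a n‖ ≤ C) (x : 𝕜) :
    Summable fun n => a n / n ! * x ^ n := by
  refine .of_norm_bounded ((Real.summable_pow_div_factorial ‖x‖).mul_left C) fun n => ?_
  rw [norm_mul, norm_div, norm_pow, RCLike.norm_natCast, mul_div_assoc', div_mul_eq_mul_div]
  gcongr
  exact ha n

lemma hasDerivAt_div_factorial_succ_mul_pow_succ (c : 𝕜) (n : ℕ) (x : 𝕜) :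
    HasDerivAt (fun y => c / (n + 1)! * y ^ (n + 1)) (c / n ! * x ^ n) x := by
  refine ((hasDerivAt_pow (n + 1) x).const_mul (c / (n + 1)!)).congr_deriv ?_
  rw [Nat.factorial_succ]
  push_cast
  field_simp

/-- Termwise differentiation of the shifted series is justified on the ball of radius
`R = ‖x‖ + 1`, where the differentiated series is dominated by `C * R ^ n / n!`. -/
theorem hasDerivAt_tsum_div_factorial_mul_pow (ha : ∀ n, ‖a n‖ ≤ C) (x : 𝕜) :
    HasDerivAt (fun y => ∑' n, a n / n ! * y ^ n) (∑' n, a (n + 1) / n ! * x ^ n) x := by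
  have hshift : (fun y => ∑' n, a n / n ! * y ^ n) =
      fun y => a 0 + ∑' n, a (n + 1) / (n + 1)! * y ^ (n + 1) := by
    funext y
    rw [(summable_div_factorial_mul_pow ha y).tsum_eq_zero_add]
    simp
  rw [hshift]
  refine HasDerivAt.const_add _ ?_
  set R := ‖x‖ + 1
  have hbound : ∀ n, ∀ y ∈ Metric.ball (0 : 𝕜) R,
      ‖a (n + 1) / n ! * y ^ n‖ ≤ C * (R ^ n / n !) := by
    intro n y hy
    rw [mem_ball_zero_iff] at hy
    rw [norm_mul, norm_div, norm_pow, RCLike.norm_natCast, mul_div_assoc', div_mul_eq_mul_div]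
    have hC : 0 ≤ C := (norm_nonneg _).trans (ha 0)
    gcongr
    exact ha (n + 1)
  have hx : x ∈ Metric.ball (0 : 𝕜) R := mem_ball_zero_iff.2 (lt_add_one _)
  have hconn : IsPreconnected (Metric.ball (0 : 𝕜) R) := Metric.isPreconnected_ball
  have hsx : Summable fun n => a (n + 1) / (n + 1)! * x ^ (n + 1) :=
    (summable_nat_add_iff (f := fun n => a n / n ! * x ^ n) 1).2
      (summable_div_factorial_mul_pow ha x)
  exact hasDerivAt_tsum_of_isPreconnected (g := fun n y => a (n + 1) / (n + 1)! * y ^ (n + 1))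
    (g' := fun n y => a (n + 1) / n ! * y ^ n) ((Real.summable_pow_div_factorial R).mul_left C)
    Metric.isOpen_ball hconn
    (fun n y _ => hasDerivAt_div_factorial_succ_mul_pow_succ _ n y) hbound hx hsx hx

end ExpTypeSeries

/-- The mean of `a` under the Poisson distribution with parameter `s`. -/
noncomputable def poissonMean (a : ℕ → ℝ) (s : ℝ) : ℝ :=
  Real.exp (-s) * ∑' n, a n / n ! * s ^ n

section PoissonMean

variable {a : ℕ → ℝ} {C : ℝ}

theorem hasDerivAt_poissonMean (ha : ∀ n, |a n| ≤ C) (s : ℝ) :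
    HasDerivAt (poissonMean a) (poissonMean (fun n => a (n + 1) - a n) s) s := by
  have ha' : ∀ n, ‖a n‖ ≤ C := ha
  have hdiff : ∑' n, (a (n + 1) - a n) / n ! * s ^ n =
      ∑' n, a (n + 1) / n ! * s ^ n - ∑' n, a n / n ! * s ^ n := by
    rw [← (summable_div_factorial_mul_pow (fun n => ha' (n + 1)) s).tsum_sub
      (summable_div_factorial_mul_pow ha' s)]
    simp_rw [sub_div, sub_mul]
  refine ((hasDerivAt_neg s).exp.mul (hasDerivAt_tsum_div_factorial_mul_pow ha' s)).congr_deriv ?_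
  rw [poissonMean, hdiff]
  ring

theorem poissonMean_neg (ha : ∀ n, |a n| ≤ C) (hneg : ∀ n, a n < 0) {s : ℝ} (hs : 0 < s) :
    poissonMean a s < 0 := by
  have hterm : ∀ n, a n / n ! * s ^ n < 0 := fun n =>
    mul_neg_of_neg_of_pos (div_neg_of_neg_of_pos (hneg n) (by positivity)) (by positivity)
  have htsum : ∑' n, a n / n ! * s ^ n < 0 := by
    simpa using (summable_div_factorial_mul_pow ha s).tsum_lt_tsum (fun n => (hterm n).le)
      (hterm 0) summable_zero
  exact mul_neg_of_pos_of_neg (Real.exp_pos _) htsum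

end PoissonMean

theorem strictAnti_poisson_weighted_general (g : ℕ → ℝ) (hanti : StrictAnti g)
    (hpos : ∀ m : ℕ, 0 < g m) :
    StrictAntiOn (fun s : ℝ => Real.exp (-s) * ∑' m : ℕ, (g m / (Nat.factorial m)) * s ^ m)
        (Set.Ioi 0) ∧
      ∀ s : ℝ, 0 < s →
        HasDerivAt (fun s : ℝ => Real.exp (-s) * ∑' m : ℕ, (g m / (Nat.factorial m)) * s ^ m)
          (Real.exp (-s) * ∑' m : ℕ, ((g (m + 1) - g m) / (Nat.factorial m)) * s ^ m) s ∧
        Real.exp (-s) * ∑' m : ℕ, ((g (m + 1) - g m) / (Nat.factorial m)) * s ^ m < 0 := by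
  have hbound : ∀ m, |g m| ≤ g 0 := fun m =>
    (abs_of_pos (hpos m)).trans_le (hanti.antitone (Nat.zero_le m))
  have hdiff_bound : ∀ m, |g (m + 1) - g m| ≤ g 0 + g 0 := fun m =>
    (abs_sub _ _).trans (add_le_add (hbound _) (hbound _))
  have hderiv := hasDerivAt_poissonMean hbound
  have hneg : ∀ s, 0 < s → poissonMean (fun m => g (m + 1) - g m) s < 0 := fun s hs =>
    poissonMean_neg hdiff_bound (fun m => sub_neg.2 (hanti m.lt_succ_self)) hs
  refine ⟨strictAntiOn_of_hasDerivWithinAt_neg (convex_Ioi 0)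
    (fun s _ => (hderiv s).continuousAt.continuousWithinAt) (fun s _ => (hderiv s).hasDerivWithinAt)
    (fun s hs => hneg s (by rwa [interior_Ioi] at hs)), fun s hs => ⟨hderiv s, hneg s hs⟩⟩

/-- Let `(g_m)` be a strictly decreasing bounded sequence of positive
reals. Then `f(s) = e^{-s} ∑_{m} (g_m/m!) s^m` is strictly decreasing on `(0,∞)`,
since its derivative equals `e^{-s} ∑_{m} ((g_{m+1} - g_m)/m!) s^m < 0` for `s > 0`. -/
theorem strictAnti_poisson_weighted (g : ℕ → ℝ) (hanti : StrictAnti g)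
    (hpos : ∀ m : ℕ, 0 < g m) (hbd : ∃ C : ℝ, ∀ m : ℕ, g m ≤ C) :
    StrictAntiOn (fun s : ℝ => Real.exp (-s) * ∑' m : ℕ, (g m / (Nat.factorial m)) * s ^ m)
        (Set.Ioi 0) ∧
      ∀ s : ℝ, 0 < s →
        HasDerivAt (fun s : ℝ => Real.exp (-s) * ∑' m : ℕ, (g m / (Nat.factorial m)) * s ^ m)
          (Real.exp (-s) * ∑' m : ℕ, ((g (m + 1) - g m) / (Nat.factorial m)) * s ^ m) s ∧
        Real.exp (-s) * ∑' m : ℕ, ((g (m + 1) - g m) / (Nat.factorial m)) * s ^ m < 0 :=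
  strictAnti_poisson_weighted_general g hanti hpos
end

section
/- Let f : [0,∞) → ℝ be continuous, strictly decreasing, with f(0) > 1 and f(x) → 0 as x → ∞. Then the equation (1/B) ∫_0^B f(x) dx = 1 has exactly one solution B > 0. If instead f(0) ≤ 1, the equation has no positive solution. -/
/-!
The primitive `F B = ∫₀^B f` has strictly decreasing derivative `f`, so it is strictly concave
and its secant slopes from the origin, the means `F B / B`, decrease strictly in `B`. The mean lies
between `f B` and `f 0`, so it exceeds `1` for small `B` since `f 0 > 1`, while `f → 0` drives it
below `1` for large `B`; continuity and strict monotonicity give exactly one crossing of `1`. When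
`f 0 ≤ 1`, the mean at any `B > 0` is below the mean at `B / 2 ≤ f 0`, hence below `1`.
-/

open MeasureTheory Filter Set intervalIntegral

section Primitive

variable {f : ℝ → ℝ} {a : ℝ}

theorem ContinuousOn.intervalIntegrable_of_Ici (hf : ContinuousOn f (Ici a)) {b c : ℝ}
    (hb : a ≤ b) (hc : a ≤ c) : IntervalIntegrable f volume b c :=
  (hf.mono fun _ hx => le_trans (le_min hb hc) hx.1).intervalIntegrable

theorem continuousOn_primitive_Ici (hf : ContinuousOn f (Ici a)) :
    ContinuousOn (fun B => ∫ x in a..B, f x) (Ici a) := by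
  intro b hb
  have hab : a ≤ b + 1 := by linarith [mem_Ici.1 hb]
  have hIcc : ContinuousOn (fun B => ∫ x in a..B, f x) (Icc a (b + 1)) := by
    simpa only [uIcc_of_le hab] using
      continuousOn_primitive_interval' (hf.intervalIntegrable_of_Ici le_rfl hab) left_mem_uIcc
  refine (hIcc b ⟨hb, by linarith⟩).mono_of_mem_nhdsWithin ?_
  rw [← Ici_inter_Iic]
  exact inter_mem_nhdsWithin _ (Iic_mem_nhds (by linarith))

theorem hasDerivAt_primitive_of_continuousOn_Ici (hf : ContinuousOn f (Ici a)) {b : ℝ}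
    (hb : a < b) : HasDerivAt (fun B => ∫ x in a..B, f x) (f b) b := by
  have hfo : ContinuousOn f (Ioi a) := hf.mono Ioi_subset_Ici_self
  exact integral_hasDerivAt_right (hf.intervalIntegrable_of_Ici le_rfl hb.le)
    (hfo.stronglyMeasurableAtFilter isOpen_Ioi b hb) (hfo.continuousAt (Ioi_mem_nhds hb))

theorem strictConcaveOn_primitive (hf : ContinuousOn f (Ici a)) (hanti : StrictAntiOn f (Ici a)) :
    StrictConcaveOn ℝ (Ici a) (fun B => ∫ x in a..B, f x) := by
  refine StrictAntiOn.strictConcaveOn_of_deriv (convex_Ici a) (continuousOn_primitive_Ici hf) ?_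
  rw [interior_Ici]
  intro x hx y hy hxy
  rw [(hasDerivAt_primitive_of_continuousOn_Ici hf hx).deriv,
    (hasDerivAt_primitive_of_continuousOn_Ici hf hy).deriv]
  exact hanti (mem_Ici_of_Ioi hx) (mem_Ici_of_Ioi hy) hxy

end Primitive

noncomputable def runningMean (f : ℝ → ℝ) (B : ℝ) : ℝ := (1 / B) * ∫ x in (0:ℝ)..B, f x

section RunningMean

variable {f : ℝ → ℝ}

theorem strictAntiOn_runningMean (hf : ContinuousOn f (Ici 0))
    (hanti : StrictAntiOn f (Ici 0)) : StrictAntiOn (runningMean f) (Ioi 0) := by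
  intro x hx y hy hxy
  simpa [runningMean, div_eq_inv_mul] using
    (strictConcaveOn_primitive hf hanti).secant_strict_mono self_mem_Ici (mem_Ici_of_Ioi hx)
      (mem_Ici_of_Ioi hy) (ne_of_gt hx) (ne_of_gt hy) hxy

theorem continuousOn_runningMean (hf : ContinuousOn f (Ici 0)) :
    ContinuousOn (runningMean f) (Ioi 0) :=
  (continuousOn_const.div continuousOn_id fun _ hx => ne_of_gt hx).mul
    ((continuousOn_primitive_Ici hf).mono Ioi_subset_Ici_self)

theorem apply_le_runningMean (hf : ContinuousOn f (Ici 0)) (hanti : AntitoneOn f (Ici 0))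
    {B : ℝ} (hB : 0 < B) : f B ≤ runningMean f B := by
  have h := integral_mono_on hB.le intervalIntegrable_const
    (hf.intervalIntegrable_of_Ici le_rfl hB.le)
    fun x hx => hanti (mem_Ici.2 hx.1) (mem_Ici.2 hB.le) hx.2
  rw [runningMean, one_div, le_inv_mul_iff₀ hB]
  simpa [mul_comm] using h

theorem runningMean_le_apply_zero (hf : ContinuousOn f (Ici 0)) (hanti : AntitoneOn f (Ici 0))
    {B : ℝ} (hB : 0 < B) : runningMean f B ≤ f 0 := by
  have h := integral_mono_on hB.le (hf.intervalIntegrable_of_Ici le_rfl hB.le)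
    intervalIntegrable_const fun x hx => hanti self_mem_Ici (mem_Ici.2 hx.1) hx.1
  rw [runningMean, one_div, inv_mul_le_iff₀ hB]
  simpa [mul_comm] using h

theorem runningMean_lt_apply_zero (hf : ContinuousOn f (Ici 0)) (hanti : StrictAntiOn f (Ici 0))
    {B : ℝ} (hB : 0 < B) : runningMean f B < f 0 :=
  calc runningMean f B < runningMean f (B / 2) :=
        strictAntiOn_runningMean hf hanti (half_pos hB) hB (half_lt_self hB)
    _ ≤ f 0 := runningMean_le_apply_zero hf hanti.antitoneOn (half_pos hB)

theorem exists_runningMean_lt (hf : ContinuousOn f (Ici 0)) (hlim : Tendsto f atTop (nhds 0))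
    {r : ℝ} (hr : 0 < r) : ∃ c, 0 < c ∧ runningMean f c < r := by
  obtain ⟨b, hb⟩ := eventually_atTop.1 (hlim.eventually (eventually_lt_nhds (half_pos hr)))
  set b₀ := max b 0
  set K := ∫ x in (0:ℝ)..b₀, f x
  -- past `b₀` the integrand is below `r / 2`, and the head `K` adds less than `r / 2` to the
  -- mean once `c > 2K/r`
  set c := max (b₀ + 1) (2 * K / r + 1)
  have hb₀ : 0 ≤ b₀ := le_max_right _ _
  have hcb₀ : b₀ ≤ c := by linarith [le_max_left (b₀ + 1) (2 * K / r + 1)]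
  have hc : 0 < c := by linarith [le_max_left (b₀ + 1) (2 * K / r + 1)]
  have hKc : 2 * K < c * r := by
    have : 2 * K / r < c := by linarith [le_max_right (b₀ + 1) (2 * K / r + 1)]
    rwa [div_lt_iff₀ hr] at this
  have htail : ∫ x in b₀..c, f x ≤ (c - b₀) * (r / 2) := by
    have h := integral_mono_on hcb₀ (hf.intervalIntegrable_of_Ici hb₀ (hb₀.trans hcb₀))
      intervalIntegrable_const fun x hx => (hb x ((le_max_left b 0).trans hx.1)).le
    rwa [intervalIntegral.integral_const, smul_eq_mul] at h
  have hsplit : ∫ x in (0:ℝ)..c, f x = K + ∫ x in b₀..c, f x :=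
    (integral_add_adjacent_intervals (hf.intervalIntegrable_of_Ici le_rfl hb₀)
      (hf.intervalIntegrable_of_Ici hb₀ (hb₀.trans hcb₀))).symm
  refine ⟨c, hc, ?_⟩
  rw [runningMean, one_div, inv_mul_lt_iff₀ hc, hsplit]
  nlinarith

end RunningMean

/-- Let `f : [0,∞) → ℝ` be continuous, strictly decreasing, with
`f(x) → 0` as `x → ∞`. If `f(0) > 1` then `(1/B) ∫_0^B f = 1` has exactly one
solution `B > 0`; if `f(0) ≤ 1` it has no positive solution. -/
theorem averaging_eq_one_unique_solution (f : ℝ → ℝ)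
    (hfc : ContinuousOn f (Set.Ici 0)) (hfa : StrictAntiOn f (Set.Ici 0))
    (hflim : Tendsto f atTop (nhds 0)) :
    (1 < f 0 → ∃! B : ℝ, 0 < B ∧ (1 / B) * ∫ x in (0:ℝ)..B, f x = 1) ∧
      (f 0 ≤ 1 → ¬∃ B : ℝ, 0 < B ∧ (1 / B) * ∫ x in (0:ℝ)..B, f x = 1) := by
  change (1 < f 0 → ∃! B, 0 < B ∧ runningMean f B = 1) ∧
    (f 0 ≤ 1 → ¬∃ B, 0 < B ∧ runningMean f B = 1)
  refine ⟨fun hf0 => ?_, fun hf0 ⟨B, hB, hmean⟩ => ?_⟩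
  · obtain ⟨a, hfa1, ha⟩ : ∃ a, 1 < f a ∧ 0 < a :=
      (((hfc 0 self_mem_Ici).eventually_const_lt hf0).filter_mono
        (nhdsWithin_mono 0 Ioi_subset_Ici_self)).and self_mem_nhdsWithin |>.exists
    obtain ⟨c, hc, hmean_c⟩ := exists_runningMean_lt hfc hflim one_pos
    have hsub : uIcc a c ⊆ Ioi 0 := fun x hx => lt_of_lt_of_le (lt_min ha hc) hx.1
    have hmean_a : 1 < runningMean f a := hfa1.trans_le (apply_le_runningMean hfc hfa.antitoneOn ha)
    obtain ⟨B, hBac, hmean⟩ := intermediate_value_uIcc ((continuousOn_runningMean hfc).mono hsub)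
      (mem_uIcc.2 (.inr ⟨hmean_c.le, hmean_a.le⟩))
    exact ⟨B, ⟨hsub hBac, hmean⟩, fun y hy =>
      (strictAntiOn_runningMean hfc hfa).injOn hy.1 (hsub hBac) (hy.2.trans hmean.symm)⟩
  · linarith [runningMean_lt_apply_zero hfc hfa hB]
end

section
/- Let μ > 0, β₀ > 0, g₀ > 0 and let g : [0,∞) → (0,g₀] be continuous, decreasing, with g(0) = g₀ and g(z) → 0 as z → ∞. Suppose R₀ := β₀g₀/μ² > 1. Then the equation β₀ ∫_0^∞ (∫_0^a g((b/μ)e^{-μτ}) dτ) e^{-μa} da = 1 has a unique solution b̄ > 0. -/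
/-!
Write `G c = ∫_0^c g`. Integrating by parts in `a` and substituting `t = c e^{-μτ}` evaluates
the double integral as `G c / (μ² c)` with `c = b/μ`, so the equation becomes `F c = 0` for
`F c = G c - (μ²/β₀) c`. Since `g` is antitone, `F` is concave, and `F 0 = 0`. Near `0` the
slope of `F` is about `g 0 - μ²/β₀ > 0` (this is `R₀ > 1`), while `g → 0` makes `F` eventually
negative. A concave function vanishing at `0` and positive somewhere has at most one positive
zero, and the intermediate value theorem supplies one.
-/

open MeasureTheory Real Filter Set Topology intervalIntegral

namespace ConcaveOn

variable {F : ℝ → ℝ} {d : ℝ}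

theorem lt_of_map_eq_zero (hF : ConcaveOn ℝ (Ici 0) F) (h0 : F 0 = 0) (hFd : 0 < F d)
    {c : ℝ} (hc : 0 < c) (hFc : F c = 0) : d < c := by
  by_contra! hcd
  have hlt : c < d := hcd.lt_of_ne (by rintro rfl; linarith)
  have hslope := hF.slope_anti_adjacent self_mem_Ici (hc.trans hlt).le hc hlt
  rw [hFc, h0, sub_zero, sub_self, zero_div] at hslope
  exact (div_pos hFd (sub_pos.2 hlt)).not_ge hslope

theorem existsUnique_pos_map_eq_zero (hF : ConcaveOn ℝ (Ici 0) F) (h0 : F 0 = 0) (hd : 0 < d)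
    (hFd : 0 < F d) {e : ℝ} (he : 0 < e) (hFe : F e < 0) : ∃! c, 0 < c ∧ F c = 0 := by
  have hcont : ContinuousOn F (uIcc d e) :=
    (interior_Ici (a := (0 : ℝ)) ▸ hF.continuousOn_interior).mono
      fun _ ht => (lt_min hd he).trans_le ht.1
  obtain ⟨c, hc, hFc⟩ := intermediate_value_uIcc hcont (mem_uIcc.2 (Or.inr ⟨hFe.le, hFd.le⟩))
  have hc_pos : 0 < c := (lt_min hd he).trans_le hc.1
  suffices h : ∀ c₁ c₂, 0 < c₁ → F c₁ = 0 → F c₂ = 0 → ¬c₁ < c₂ by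
    refine ⟨c, ⟨hc_pos, hFc⟩, fun c' ⟨hc', hFc'⟩ => ?_⟩
    exact le_antisymm (not_lt.1 (h c c' hc_pos hFc hFc')) (not_lt.1 (h c' c hc' hFc' hFc))
  intro c₁ c₂ hc₁ hFc₁ hFc₂ h₁₂
  have hdc₁ := hF.lt_of_map_eq_zero h0 hFd hc₁ hFc₁
  have hslope := hF.slope_anti_adjacent hd.le (hc₁.trans h₁₂).le hdc₁ h₁₂
  rw [hFc₁, hFc₂, sub_zero, zero_div, zero_sub] at hslope
  exact (div_neg_of_neg_of_pos (neg_neg_of_pos hFd) (sub_pos.2 hdc₁)).not_ge hslope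

end ConcaveOn

section Primitive

variable {g : ℝ → ℝ}

theorem intervalIntegrable_of_continuousOn_Ici (hgc : ContinuousOn g (Ici 0)) {x y : ℝ}
    (hx : 0 ≤ x) (hy : 0 ≤ y) : IntervalIntegrable g volume x y :=
  (hgc.mono fun _ ht => (le_min hx hy).trans ht.1).intervalIntegrable

theorem hasDerivWithinAt_primitive_Ici (hgc : ContinuousOn g (Ici 0)) {x : ℝ} (hx : 0 ≤ x) :
    HasDerivWithinAt (fun c => ∫ t in 0..c, g t) (g x) (Ici 0) x := by
  have : Fact (x ∈ Icc 0 (x + 1)) := ⟨⟨hx, by linarith⟩⟩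
  have hsub : Icc (0 : ℝ) (x + 1) ⊆ Ici 0 := Icc_subset_Ici_self
  refine (integral_hasDerivWithinAt_right (s := Icc 0 (x + 1)) (t := Icc 0 (x + 1))
    (intervalIntegrable_of_continuousOn_Ici hgc le_rfl hx)
    ((hgc.mono hsub).stronglyMeasurableAtFilter_nhdsWithin measurableSet_Icc x)
    ((hgc x hx).mono hsub)).mono_of_mem_nhdsWithin ?_
  rw [← Ici_inter_Iic]
  exact inter_mem self_mem_nhdsWithin (mem_nhdsWithin_of_mem_nhds (Iic_mem_nhds (by linarith)))

theorem continuousOn_primitive_Ici_s11 (hgc : ContinuousOn g (Ici 0)) :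
    ContinuousOn (fun c => ∫ t in 0..c, g t) (Ici 0) :=
  fun _ hx => (hasDerivWithinAt_primitive_Ici hgc hx).continuousWithinAt

theorem hasDerivAt_primitive_of_pos (hgc : ContinuousOn g (Ici 0)) {x : ℝ} (hx : 0 < x) :
    HasDerivAt (fun c => ∫ t in 0..c, g t) (g x) x :=
  (hasDerivWithinAt_primitive_Ici hgc hx.le).hasDerivAt (Ici_mem_nhds hx)

theorem concaveOn_primitive_Ici (hgc : ContinuousOn g (Ici 0)) (hg : AntitoneOn g (Ici 0)) :
    ConcaveOn ℝ (Ici 0) (fun c => ∫ t in 0..c, g t) := by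
  refine AntitoneOn.concaveOn_of_deriv (convex_Ici 0) (continuousOn_primitive_Ici_s11 hgc) ?_ ?_ <;>
    rw [interior_Ici]
  · exact fun x hx => (hasDerivAt_primitive_of_pos hgc hx).differentiableAt.differentiableWithinAt
  · intro x hx y hy hxy
    rw [(hasDerivAt_primitive_of_pos hgc hx).deriv, (hasDerivAt_primitive_of_pos hgc hy).deriv]
    exact hg (mem_Ici_of_Ioi hx) (mem_Ici_of_Ioi hy) hxy

theorem exists_mul_lt_primitive (hgc : ContinuousOn g (Ici 0)) {m : ℝ} (hm : m < g 0) :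
    ∃ d > 0, m * d < ∫ t in 0..d, g t := by
  obtain ⟨d, hd, hgt⟩ : ∃ d > 0, Icc 0 d ⊆ {x | m < g x} :=
    (mem_nhdsGE_iff_exists_Icc_subset).1 (hgc 0 self_mem_Ici (Ioi_mem_nhds hm))
  have hint := intervalIntegrable_of_continuousOn_Ici hgc le_rfl hd.le
  have hpos : 0 < ∫ t in 0..d, (g t - m) :=
    intervalIntegral_pos_of_pos_on (hint.sub intervalIntegrable_const)
      (fun x hx => sub_pos.2 (hgt (Ioo_subset_Icc_self hx))) hd
  rw [integral_sub hint intervalIntegrable_const, intervalIntegral.integral_const, smul_eq_mul,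
    sub_zero] at hpos
  exact ⟨d, hd, by linarith⟩

theorem exists_primitive_lt_mul (hgc : ContinuousOn g (Ici 0)) (hglim : Tendsto g atTop (𝓝 0))
    {m : ℝ} (hm : 0 < m) : ∃ e > 0, ∫ t in 0..e, g t < m * e := by
  obtain ⟨M, hM⟩ := eventually_atTop.1
    ((hglim.eventually (gt_mem_nhds (half_pos hm))).and (eventually_ge_atTop 0))
  have hM0 : 0 ≤ M := (hM M le_rfl).2
  set C := ∫ t in 0..M, g t
  set e := max M (2 * C / m) + 1
  have hMe : M < e := (le_max_left _ _).trans_lt (lt_add_one _)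
  have hCe : 2 * C < m * e := (div_lt_iff₀' hm).1 ((le_max_right _ _).trans_lt (lt_add_one _))
  have hint_tail := intervalIntegrable_of_continuousOn_Ici hgc hM0 (hM0.trans hMe.le)
  have htail : ∫ t in M..e, g t ≤ (e - M) * m / 2 := by
    simpa using integral_mono_on hMe.le hint_tail intervalIntegrable_const
      fun x hx => (hM x hx.1).1.le
  refine ⟨e, hM0.trans_lt hMe, ?_⟩
  rw [← integral_add_adjacent_intervals (intervalIntegrable_of_continuousOn_Ici hgc le_rfl hM0)
    hint_tail]
  nlinarith

theorem hasDerivAt_exp_neg_mul (μ a : ℝ) :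
    HasDerivAt (fun a => exp (-(μ * a))) (-μ * exp (-(μ * a))) a := by
  simpa [mul_comm] using ((hasDerivAt_id a).const_mul μ).neg.exp

theorem tendsto_exp_neg_mul_mul_primitive {μ K : ℝ} (hμ : 0 < μ) (hg : ∀ x, |g x| ≤ K) :
    Tendsto (fun a => exp (-(μ * a)) * ∫ τ in 0..a, g τ) atTop (𝓝 0) := by
  have hlim : Tendsto (fun a => K / μ * ((μ * a) ^ 1 * exp (-(μ * a)))) atTop (𝓝 0) := by
    simpa using ((tendsto_pow_mul_exp_neg_atTop_nhds_zero 1).comp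
      (tendsto_id.const_mul_atTop hμ)).const_mul (K / μ)
  refine squeeze_zero_norm' ?_ hlim
  filter_upwards [eventually_ge_atTop 0] with a ha
  have hG : |∫ τ in 0..a, g τ| ≤ K * a := by
    simpa [abs_of_nonneg ha] using norm_integral_le_of_norm_le_const (a := 0) (b := a)
      fun x _ => (Real.norm_eq_abs (g x)).trans_le (hg x)
  rw [norm_mul, norm_of_nonneg (exp_pos _).le, Real.norm_eq_abs]
  calc _ ≤ exp (-(μ * a)) * (K * a) := by gcongr
    _ = _ := by field_simp

theorem integral_Ioi_primitive_comp_exp_mul_exp {μ c K : ℝ} (hμ : 0 < μ) (hc : 0 < c)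
    (hgc : ContinuousOn g (Ici 0)) (hg : ∀ z, 0 ≤ z → 0 ≤ g z ∧ g z ≤ K) :
    ∫ a in Ioi 0, (∫ τ in 0..a, g (c * exp (-(μ * τ)))) * exp (-(μ * a))
      = (∫ t in 0..c, g t) / (μ ^ 2 * c) := by
  set G := fun y => ∫ t in 0..y, g t
  set f := fun a => c * exp (-(μ * a))
  set Ψ := fun a => ∫ τ in 0..a, g (f τ)
  have hf_pos : ∀ a, 0 < f a := fun a => mul_pos hc (exp_pos _)
  have hφ : Continuous fun a => g (f a) :=
    hgc.comp_continuous (by fun_prop) fun a => (hf_pos a).le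
  have hφ_bound : ∀ a, |g (f a)| ≤ K := fun a => by
    rw [abs_of_nonneg (hg _ (hf_pos a).le).1]
    exact (hg _ (hf_pos a).le).2
  -- `-G (f a) / (μ² c)` is a primitive of `g (f a) e^{-μa} / μ`; the other term is the boundary
  -- term of the integration by parts.
  let u := fun a => -G (f a) / (μ ^ 2 * c) - exp (-(μ * a)) * Ψ a / μ
  have hu : ∀ a, HasDerivAt u (Ψ a * exp (-(μ * a))) a := by
    intro a
    have hGf := (hasDerivAt_primitive_of_pos hgc (hf_pos a)).comp a
      ((hasDerivAt_exp_neg_mul μ a).const_mul c)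
    have hΨ := (hφ.integral_hasStrictDerivAt 0 a).hasDerivAt
    refine ((hGf.neg.div_const (μ ^ 2 * c)).sub
      (((hasDerivAt_exp_neg_mul μ a).mul hΨ).div_const μ)).congr_deriv ?_
    field_simp
    ring
  have hu_lim : Tendsto u atTop (𝓝 0) := by
    have hf_lim : Tendsto f atTop (𝓝[Ici 0] 0) := by
      refine tendsto_nhdsWithin_iff.2 ⟨?_, .of_forall fun a => (hf_pos a).le⟩
      simpa using (tendsto_exp_atBot.comp (tendsto_neg_atTop_atBot.comp
        (tendsto_id.const_mul_atTop hμ))).const_mul c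
    have hG := ((continuousOn_primitive_Ici_s11 hgc) 0 self_mem_Ici).tendsto.comp hf_lim
    simpa [G] using (hG.neg.div_const (μ ^ 2 * c)).sub
      ((tendsto_exp_neg_mul_mul_primitive hμ hφ_bound).div_const μ)
  have := integral_Ioi_of_hasDerivAt_of_nonneg' (fun a _ => hu a)
    (fun a ha => mul_nonneg (integral_nonneg ha.le fun τ _ => (hg _ (hf_pos τ).le).1)
      (exp_pos _).le) hu_lim
  simpa [u, Ψ, f, G, neg_div] using this

end Primitive

theorem deterministic_stationary_birth_rate_general (μ β₀ g₀ : ℝ) (hμ : 0 < μ) (hβ₀ : 0 < β₀)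
    (g : ℝ → ℝ)
    (hgc : ContinuousOn g (Set.Ici 0))
    (hgrange : ∀ z : ℝ, 0 ≤ z → 0 < g z ∧ g z ≤ g₀)
    (hganti : AntitoneOn g (Set.Ici 0))
    (hg0 : g 0 = g₀)
    (hglim : Tendsto g atTop (nhds 0))
    (hR0 : 1 < β₀ * g₀ / μ ^ 2) :
    ∃! b : ℝ, 0 < b ∧
      β₀ * ∫ a in Set.Ioi (0:ℝ),
        (∫ τ in (0:ℝ)..a, g ((b / μ) * Real.exp (-(μ * τ)))) * Real.exp (-(μ * a)) = 1 := by
  set m := μ ^ 2 / β₀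
  have hm : 0 < m := by positivity
  have hm_lt : m < g 0 := by
    rw [hg0, div_lt_iff₀ hβ₀, mul_comm]
    exact (one_lt_div (by positivity)).1 hR0
  set F := fun c => (∫ t in 0..c, g t) - m * c
  have hF : ConcaveOn ℝ (Ici 0) F :=
    (concaveOn_primitive_Ici hgc hganti).sub ((convexOn_id (convex_Ici 0)).smul hm.le)
  have hsol : ∀ b, 0 < b → (β₀ * ∫ a in Ioi 0,
      (∫ τ in 0..a, g ((b / μ) * exp (-(μ * τ)))) * exp (-(μ * a)) = 1 ↔ F (b / μ) = 0) := by
    intro b hb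
    rw [integral_Ioi_primitive_comp_exp_mul_exp hμ (div_pos hb hμ) hgc
      fun z hz => ⟨(hgrange z hz).1.le, (hgrange z hz).2⟩]
    simp only [F, m, sub_eq_zero]
    field_simp
  obtain ⟨d, hd, hFd⟩ := exists_mul_lt_primitive hgc hm_lt
  obtain ⟨e, he, hFe⟩ := exists_primitive_lt_mul hgc hglim hm
  obtain ⟨c, ⟨hc, hFc⟩, huniq⟩ :=
    hF.existsUnique_pos_map_eq_zero (by simp [F]) hd (sub_pos.2 hFd) he (sub_neg.2 hFe)
  refine ⟨μ * c, ⟨mul_pos hμ hc, (hsol _ (mul_pos hμ hc)).2 ?_⟩, ?_⟩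
  · rwa [mul_div_cancel_left₀ _ hμ.ne']
  · rintro b ⟨hb, hb_sol⟩
    rw [← huniq (b / μ) ⟨div_pos hb hμ, (hsol b hb).1 hb_sol⟩, mul_div_cancel₀ _ hμ.ne']

/-- Let `μ, β₀, g₀ > 0` and `g : [0,∞) → (0,g₀]` be continuous,
decreasing, with `g(0) = g₀` and `g(z) → 0` as `z → ∞`. If `R₀ = β₀g₀/μ² > 1`,
then `β₀ ∫_0^∞ (∫_0^a g((b/μ)e^{-μτ}) dτ) e^{-μa} da = 1` has a unique solution
`b̄ > 0`. -/
theorem deterministic_stationary_birth_rate (μ β₀ g₀ : ℝ) (hμ : 0 < μ) (hβ₀ : 0 < β₀)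
    (hg₀ : 0 < g₀) (g : ℝ → ℝ)
    (hgc : ContinuousOn g (Set.Ici 0))
    (hgrange : ∀ z : ℝ, 0 ≤ z → 0 < g z ∧ g z ≤ g₀)
    (hganti : AntitoneOn g (Set.Ici 0))
    (hg0 : g 0 = g₀)
    (hglim : Tendsto g atTop (nhds 0))
    (hR0 : 1 < β₀ * g₀ / μ ^ 2) :
    ∃! b : ℝ, 0 < b ∧
      β₀ * ∫ a in Set.Ioi (0:ℝ),
        (∫ τ in (0:ℝ)..a, g ((b / μ) * Real.exp (-(μ * τ)))) * Real.exp (-(μ * a)) = 1 :=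
  deterministic_stationary_birth_rate_general μ β₀ g₀ hμ hβ₀ g hgc hgrange hganti hg0 hglim hR0
end

section
/- Let μ > 0, λ > 0 and m ≥ 0 an integer. Define l via: for m ≥ 1 and k > m, l_m^k(τ) = (1/(mμ)) ∫_0^τ (1 - e^{-mμ(τ-y)}) f_{Y_{k-m}^k}(y) dy with l_m^m(τ) = (1/(mμ))(1-e^{-mμτ}); and p_k = (λ/μ)^k e^{-λ/μ}/k!. Then ∑_{k=m}^∞ p_k l_m^k(τ) = (1/μ)(1/m!)·(Γ(m, (λ/μ)e^{-μτ}) - Γ(m, λ/μ)) for all τ > 0, where Γ is the upper incomplete gamma function. -/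
open MeasureTheory Real

/-- Density of the `j`-th order statistic of `k` i.i.d. `Exp(μ)` lifetimes (for `y > 0`). -/
noncomputable def fY (μ : ℝ) (j k : ℕ) (y : ℝ) : ℝ :=
  (1 / (Nat.factorial (j - 1))) * ((Nat.factorial k : ℝ) / (Nat.factorial (k - j))) * μ *
    Real.exp (-(((k : ℝ) - (j : ℝ) + 1) * μ * y)) * (1 - Real.exp (-(μ * y))) ^ (j - 1)

/-- Expected time in `[0,τ]` during which exactly `m` of `k` initial individuals
remain alive: `l_m^k(τ) = (1/(mμ)) ∫_0^τ (1 - e^{-mμ(τ-y)}) f_{Y_{k-m}^k}(y) dy` for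
`k > m`, and `l_m^m(τ) = (1/(mμ))(1 - e^{-mμτ})`. -/
noncomputable def lLapse (μ : ℝ) (m k : ℕ) (τ : ℝ) : ℝ :=
  if k = m then (1 / ((m : ℝ) * μ)) * (1 - Real.exp (-((m : ℝ) * μ * τ)))
  else (1 / ((m : ℝ) * μ)) *
    ∫ y in (0:ℝ)..τ, (1 - Real.exp (-((m : ℝ) * μ * (τ - y)))) * fY μ (k - m) k y

/-! With `a = λ/μ`, the Poisson weights turn the order-statistic densities into an exponential
series: `∑_{k>m} p_k f_{Y_{k-m}^k}(y) = a^{m+1} μ e^{-(m+1)μy} e^{-a e^{-μy}} / m!`. All terms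
are nonnegative, so the sum may be taken inside the integral defining `l_m^k`, and the substitution
`z = a e^{-μy}` turns the tail `k > m` into `(1/(mμ m!)) ∫_b^a (z^m - b^m) e^{-z} dz` with
`b = a e^{-μτ}`. Integrating by parts, the boundary term at `a` cancels the `k = m` term
`(a^m - b^m) e^{-a}/(mμ m!)`, leaving `(1/(μ m!)) ∫_b^a z^{m-1} e^{-z} dz`. -/

open scoped Nat

noncomputable def poissonWeight (a : ℝ) (k : ℕ) : ℝ :=
  a ^ k * exp (-a) / k !

lemma integrableOn_pow_mul_exp_neg_Ioi (n : ℕ) {c : ℝ} (hc : 0 ≤ c) :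
    IntegrableOn (fun t : ℝ => t ^ n * exp (-t)) (Set.Ioi c) := by
  refine ((GammaIntegral_convergent (s := n + 1) (by positivity)).mono_set
    (Set.Ioi_subset_Ioi hc)).congr_fun (fun t _ => ?_) measurableSet_Ioi
  simp [mul_comm]

lemma integral_pow_sub_pow_mul_exp_neg (m : ℕ) (a b : ℝ) :
    ∫ z in b..a, (z ^ m - b ^ m) * exp (-z) =
      m * (∫ z in b..a, z ^ (m - 1) * exp (-z)) - (a ^ m - b ^ m) * exp (-a) := by
  have hu (z : ℝ) : HasDerivAt (fun z => z ^ m - b ^ m) (m * z ^ (m - 1)) z :=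
    (hasDerivAt_pow m z).sub_const _
  have hv (z : ℝ) : HasDerivAt (fun z => -exp (-z)) (exp (-z)) z := by
    simpa using (hasDerivAt_neg z).exp.fun_neg
  rw [intervalIntegral.integral_mul_deriv_eq_deriv_mul (fun z _ => hu z) (fun z _ => hv z)
    (Continuous.intervalIntegrable (by fun_prop) _ _)
    (Continuous.intervalIntegrable (by fun_prop) _ _)]
  simp only [mul_neg, intervalIntegral.integral_neg, mul_assoc,
    intervalIntegral.integral_const_mul, sub_self, zero_mul]
  ring

lemma integral_comp_mul_exp_neg {g : ℝ → ℝ} (hg : Continuous g) (a μ τ : ℝ) :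
    ∫ y in (0 : ℝ)..τ, μ * (a * exp (-(μ * y))) * g (a * exp (-(μ * y))) =
      ∫ z in a * exp (-(μ * τ))..a, g z := by
  have hf (y : ℝ) :
      HasDerivAt (fun y => a * exp (-(μ * y))) (-(μ * (a * exp (-(μ * y))))) y :=
    (((hasDerivAt_id' y).const_mul μ).fun_neg.exp.const_mul a).congr_deriv (by ring)
  have := intervalIntegral.integral_comp_mul_deriv (a := τ) (b := 0) (fun y _ => hf y)
    (by fun_prop) hg
  simp only [Function.comp_def, mul_zero, neg_zero, exp_zero, mul_one] at this
  rw [← this, intervalIntegral.integral_symm, ← intervalIntegral.integral_neg]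
  congr 1; ext y; ring

@[fun_prop]
lemma continuous_fY (μ : ℝ) (j k : ℕ) : Continuous (fY μ j k) := by
  unfold fY; fun_prop

lemma fY_nonneg {μ y : ℝ} (hμ : 0 ≤ μ) (hy : 0 ≤ y) (j k : ℕ) : 0 ≤ fY μ j k y := by
  have : 0 ≤ 1 - exp (-(μ * y)) := by
    rw [sub_nonneg, exp_le_one_iff, neg_nonpos]; positivity
  unfold fY; positivity

noncomputable def poissonMixtureFY (μ a : ℝ) (m : ℕ) (y : ℝ) : ℝ :=
  a ^ (m + 1) / m ! * μ * exp (-((m + 1) * μ * y)) * exp (-(a * exp (-(μ * y))))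

lemma hasSum_poissonWeight_mul_fY (μ a y : ℝ) (m : ℕ) :
    HasSum (fun i : ℕ => poissonWeight a (m + (i + 1)) * fY μ (i + 1) (m + (i + 1)) y)
      (poissonMixtureFY μ a m y) := by
  have hexp := (NormedSpace.expSeries_div_hasSum_exp (a * (1 - exp (-(μ * y))))).mul_left
    (a ^ (m + 1) / m ! * μ * exp (-((m + 1) * μ * y)) * exp (-a))
  rw [← exp_eq_exp_ℝ, mul_assoc _ (exp (-a)), ← exp_add,
    show -a + a * (1 - exp (-(μ * y))) = -(a * exp (-(μ * y))) by ring] at hexp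
  refine hexp.congr_fun fun i => ?_
  have hcast : ((m + (i + 1) : ℕ) : ℝ) - ((i + 1 : ℕ) : ℝ) + 1 = m + 1 := by push_cast; ring
  simp only [poissonWeight, fY, Nat.add_sub_cancel, hcast]
  rw [mul_pow]
  field_simp
  ring

lemma integral_mul_poissonMixtureFY (μ a τ : ℝ) (m : ℕ) :
    ∫ y in (0 : ℝ)..τ, (1 - exp (-(m * μ * (τ - y)))) * poissonMixtureFY μ a m y =
      1 / m ! *
        ∫ z in a * exp (-(μ * τ))..a, (z ^ m - (a * exp (-(μ * τ))) ^ m) * exp (-z) := by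
  rw [← integral_comp_mul_exp_neg (g := fun z => (z ^ m - (a * exp (-(μ * τ))) ^ m) * exp (-z))
    (by fun_prop), ← intervalIntegral.integral_const_mul]
  congr 1; ext y
  have hpow : exp (-((m + 1) * μ * y)) = exp (-(μ * y)) ^ m * exp (-(μ * y)) := by
    rw [← exp_nat_mul, ← exp_add]; ring_nf
  have hshift : exp (-(m * μ * (τ - y))) * exp (-(μ * y)) ^ m = exp (-(μ * τ)) ^ m := by
    rw [← exp_nat_mul, ← exp_nat_mul, ← exp_add]; ring_nf
  rw [poissonMixtureFY, hpow, mul_pow, mul_pow]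
  linear_combination
    (-(a ^ (m + 1) * μ * exp (-(μ * y)) * exp (-(a * exp (-(μ * y)))) / m !)) * hshift

lemma hasSum_intervalIntegral_of_nonneg {ι : Type*} [Countable ι] {F : ι → ℝ → ℝ}
    {f : ℝ → ℝ} {a b : ℝ} (hF : ∀ i, Continuous (F i)) (hf : Continuous f)
    (hF_nonneg : ∀ i, ∀ t ∈ Set.uIoc a b, 0 ≤ F i t)
    (hFf : ∀ t, HasSum (fun i => F i t) (f t)) :
    HasSum (fun i => ∫ t in a..b, F i t) (∫ t in a..b, f t) := by
  -- nonnegative terms serve as their own dominating bounds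
  refine intervalIntegral.hasSum_integral_of_dominated_convergence F
    (fun i => (hF i).aestronglyMeasurable) (fun i => ae_of_all _ fun t ht => ?_)
    (ae_of_all _ fun t _ => (hFf t).summable) ?_ (ae_of_all _ fun t _ => hFf t)
  · rw [Real.norm_of_nonneg (hF_nonneg i t ht)]
  · simp_rw [(hFf _).tsum_eq]
    exact hf.intervalIntegrable _ _

lemma hasSum_poissonWeight_mul_lLapse_succ {μ a τ : ℝ} (hμ : 0 ≤ μ) (ha : 0 ≤ a)
    (hτ : 0 ≤ τ) (m : ℕ) :
    HasSum (fun i : ℕ => poissonWeight a (m + (i + 1)) * lLapse μ m (m + (i + 1)) τ)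
      (1 / (m * μ) * (1 / m ! *
        ∫ z in a * exp (-(μ * τ))..a, (z ^ m - (a * exp (-(μ * τ))) ^ m) * exp (-z))) := by
  have hkernel_nonneg {y : ℝ} (hy : y ≤ τ) : 0 ≤ 1 - exp (-(m * μ * (τ - y))) := by
    rw [sub_nonneg, exp_le_one_iff, neg_nonpos]
    exact mul_nonneg (by positivity) (sub_nonneg.mpr hy)
  have hF := hasSum_intervalIntegral_of_nonneg (a := 0) (b := τ)
    (F := fun i y => (1 - exp (-(m * μ * (τ - y)))) *
      (poissonWeight a (m + (i + 1)) * fY μ (i + 1) (m + (i + 1)) y))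
    (fun i => by fun_prop) (by unfold poissonMixtureFY; fun_prop)
    (fun i y hy => by
      rw [Set.uIoc_of_le hτ] at hy
      have hweight : 0 ≤ poissonWeight a (m + (i + 1)) := by unfold poissonWeight; positivity
      exact mul_nonneg (hkernel_nonneg hy.2) (mul_nonneg hweight (fY_nonneg hμ hy.1.le _ _)))
    (fun y => (hasSum_poissonWeight_mul_fY μ a y m).mul_left _)
  have hterm (i : ℕ) : poissonWeight a (m + (i + 1)) * lLapse μ m (m + (i + 1)) τ =
      1 / (m * μ) * ∫ y in (0 : ℝ)..τ, (1 - exp (-(m * μ * (τ - y)))) *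
        (poissonWeight a (m + (i + 1)) * fY μ (i + 1) (m + (i + 1)) y) := by
    rw [lLapse, if_neg (by omega), Nat.add_sub_cancel_left,
      ← intervalIntegral.integral_const_mul, ← intervalIntegral.integral_const_mul,
      ← intervalIntegral.integral_const_mul]
    congr 1; ext y; ring
  rw [← integral_mul_poissonMixtureFY]
  exact (hF.mul_left _).congr_fun hterm

lemma poissonWeight_mul_lLapse_self (μ a τ : ℝ) (m : ℕ) :
    poissonWeight a m * lLapse μ m m τ =
      1 / (m * μ * m !) * ((a ^ m - (a * exp (-(μ * τ))) ^ m) * exp (-a)) := by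
  rw [lLapse, if_pos rfl, poissonWeight, mul_pow, ← exp_nat_mul]
  field_simp

/-- With `p_k = (λ/μ)^k e^{-λ/μ}/k!`,
`∑_{k=m}^∞ p_k l_m^k(τ) = (1/μ)(1/m!)(Γ(m,(λ/μ)e^{-μτ}) - Γ(m,λ/μ))` for `τ > 0`,
where `Γ(m,x) = ∫_x^∞ t^{m-1} e^{-t} dt` is the upper incomplete gamma function. -/
theorem sum_pk_lapse_eq_gamma (μ lam : ℝ) (hμ : 0 < μ) (hlam : 0 < lam)
    (m : ℕ) (hm : 1 ≤ m) (τ : ℝ) (hτ : 0 < τ) :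
    (∑' i : ℕ,
        ((lam / μ) ^ (m + i) * Real.exp (-(lam / μ)) / (Nat.factorial (m + i))) *
          lLapse μ m (m + i) τ) =
      (1 / μ) * (1 / (Nat.factorial m)) *
        ((∫ t in Set.Ioi ((lam / μ) * Real.exp (-(μ * τ))), t ^ (m - 1) * Real.exp (-t)) -
          ∫ t in Set.Ioi (lam / μ), t ^ (m - 1) * Real.exp (-t)) := by
  set a := lam / μ
  have ha : 0 ≤ a := by positivity
  have hba : a * exp (-(μ * τ)) ≤ a :=
    mul_le_of_le_one_right ha (exp_le_one_iff.mpr (by nlinarith))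
  have hsum := (hasSum_nat_add_iff
    (f := fun i => poissonWeight a (m + i) * lLapse μ m (m + i) τ) 1).mp
    (hasSum_poissonWeight_mul_lLapse_succ hμ.le ha hτ.le m)
  rw [Finset.sum_range_one, Nat.add_zero, poissonWeight_mul_lLapse_self,
    integral_pow_sub_pow_mul_exp_neg] at hsum
  refine hsum.tsum_eq.trans ?_
  rw [intervalIntegral.integral_Ioi_sub_Ioi
    (integrableOn_pow_mul_exp_neg_Ioi _ (by positivity)) hba]
  have hm0 : (m : ℝ) ≠ 0 := Nat.cast_ne_zero.mpr (by omega)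
  field_simp
  ring
end

section
/- Let μ, β₀, g₀ > 0 and g(z) = g₀/(1+z). Then β₀ ∫_0^∞ ∫_{(λ/μ)e^{-μτ}}^{λ/μ} ((1-e^{-t})/t²) dt · (g₀/μ) e^{-μτ} dτ = (β₀ g₀/(μλ)) (γ_E + ln(λ/μ) + Γ(0, λ/μ)) for all λ > 0, where γ_E is the Euler–Mascheroni constant and Γ(0,x) = ∫_x^∞ e^{-s}/s ds. -/
/-!
Substituting `u = (λ/μ) e^{-μτ}` turns the outer integral into `g₀/(μλ) · ∫₀^{λ/μ} K u du` with
`K u = ∫_u^{λ/μ} (1 - e^{-t}) / t² dt`, and an integration by parts in `u` gives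
`∫₀^x K = Ein x = ∫₀^x (1 - e^{-t}) / t dt`. Finally `Ein x = γ + log x + E₁ x`: integrate
`e^{-s} log s` by parts separately over `(0, x]` and `(x, ∞)`, and use
`∫₀^∞ e^{-s} log s ds = Γ'(1) = -γ`.
-/

open MeasureTheory Real Set Filter Topology intervalIntegral

section PrimitiveNearZero

variable {f : ℝ → ℝ} {C : ℝ}

theorem intervalIntegrable_zero_of_abs_le (hf : ContinuousOn f (Ioi 0))
    (hC : ∀ t > 0, |f t| ≤ C) {x : ℝ} (hx : 0 ≤ x) : IntervalIntegrable f volume 0 x := by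
  rw [intervalIntegrable_iff_integrableOn_Ioc_of_le hx]
  refine Integrable.mono' (integrableOn_const measure_Ioc_lt_top.ne)
    ((hf.mono Ioc_subset_Ioi_self).aestronglyMeasurable measurableSet_Ioc) ?_
  filter_upwards [ae_restrict_mem measurableSet_Ioc] with t ht
  exact hC t ht.1

theorem hasDerivAt_integral_zero_of_abs_le (hf : ContinuousOn f (Ioi 0))
    (hC : ∀ t > 0, |f t| ≤ C) {x : ℝ} (hx : 0 < x) :
    HasDerivAt (fun y => ∫ t in 0..y, f t) (f x) x :=
  integral_hasDerivAt_right (intervalIntegrable_zero_of_abs_le hf hC hx.le)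
    (hf.stronglyMeasurableAtFilter isOpen_Ioi x hx) (hf.continuousAt (Ioi_mem_nhds hx))

theorem tendsto_integral_zero_of_abs_le (hC : ∀ t > 0, |f t| ≤ C) :
    Tendsto (fun y => ∫ t in 0..y, f t) (𝓝[>] 0) (𝓝 0) := by
  have hlim : Tendsto (fun y : ℝ => C * |y|) (𝓝[>] 0) (𝓝 0) := by
    simpa using ((by fun_prop : Continuous fun y : ℝ => C * |y|).tendsto 0).mono_left
      nhdsWithin_le_nhds
  refine squeeze_zero_norm' ?_ hlim
  filter_upwards [self_mem_nhdsWithin] with y hy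
  have hbound := norm_integral_le_of_norm_le_const (f := f) fun t ht =>
    (norm_eq_abs (f t)).trans_le (hC t (by rw [uIoc_of_le (le_of_lt hy)] at ht; exact ht.1))
  rwa [sub_zero] at hbound

end PrimitiveNearZero

/-- The entire exponential integral; `E₁ x` is the upper incomplete Gamma value `Γ(0, x)`. -/
noncomputable def Ein (x : ℝ) : ℝ := ∫ t in 0..x, (1 - exp (-t)) / t

noncomputable def E₁ (x : ℝ) : ℝ := ∫ s in Ioi x, exp (-s) / s

theorem one_sub_exp_neg_nonneg {t : ℝ} (ht : 0 ≤ t) : 0 ≤ 1 - exp (-t) :=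
  sub_nonneg.2 (exp_le_one_iff.2 (neg_nonpos.2 ht))

theorem one_sub_exp_neg_le (t : ℝ) : 1 - exp (-t) ≤ t := by
  linarith [one_sub_le_exp_neg t]

theorem continuousOn_one_sub_exp_neg_div : ContinuousOn (fun t => (1 - exp (-t)) / t) (Ioi 0) :=
  ContinuousOn.div (by fun_prop) continuousOn_id fun _ ht => ht.ne'

theorem abs_one_sub_exp_neg_div_le_one {t : ℝ} (ht : 0 < t) : |(1 - exp (-t)) / t| ≤ 1 := by
  rw [abs_of_nonneg (div_nonneg (one_sub_exp_neg_nonneg ht.le) ht.le), div_le_one ht]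
  exact one_sub_exp_neg_le t

theorem hasDerivAt_Ein {x : ℝ} (hx : 0 < x) : HasDerivAt Ein ((1 - exp (-x)) / x) x :=
  hasDerivAt_integral_zero_of_abs_le continuousOn_one_sub_exp_neg_div
    (fun _ => abs_one_sub_exp_neg_div_le_one) hx

theorem tendsto_Ein_nhdsGT_zero : Tendsto Ein (𝓝[>] 0) (𝓝 0) :=
  tendsto_integral_zero_of_abs_le fun _ => abs_one_sub_exp_neg_div_le_one

theorem integrableOn_exp_neg_div {a : ℝ} (ha : 0 < a) :
    IntegrableOn (fun s => exp (-s) / s) (Ioi a) := by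
  refine Integrable.mono' ((integrableOn_exp_neg_Ioi a).const_mul a⁻¹)
    ((ContinuousOn.div (by fun_prop) continuousOn_id fun s hs => (ha.trans hs).ne')
      |>.aestronglyMeasurable measurableSet_Ioi) ?_
  filter_upwards [ae_restrict_mem measurableSet_Ioi] with s hs
  have hs0 : 0 < s := ha.trans hs
  rw [norm_div, Real.norm_of_nonneg (exp_pos _).le, Real.norm_of_nonneg hs0.le, div_eq_inv_mul]
  exact mul_le_mul_of_nonneg_right (inv_anti₀ ha hs.le) (exp_pos _).le

theorem integrableOn_exp_neg_mul_log : IntegrableOn (fun t => exp (-t) * log t) (Ioi 0) := by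
  rw [← Ioc_union_Ioi_eq_Ioi zero_le_one]
  refine IntegrableOn.union ?_ ?_
  · rw [← intervalIntegrable_iff_integrableOn_Ioc_of_le zero_le_one]
    exact intervalIntegrable_log'.continuousOn_mul (by fun_prop)
  · have hGamma : IntegrableOn (fun t => exp (-t) * t) (Ioi 0) := by
      simpa [show (2 : ℝ) - 1 = 1 by norm_num] using GammaIntegral_convergent two_pos
    refine Integrable.mono' (hGamma.mono_set (Ioi_subset_Ioi zero_le_one))
      (by fun_prop : Measurable fun t => exp (-t) * log t).aestronglyMeasurable ?_
    filter_upwards [ae_restrict_mem measurableSet_Ioi] with t ht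
    rw [norm_mul, Real.norm_of_nonneg (exp_pos _).le,
      Real.norm_of_nonneg (log_nonneg (le_of_lt ht))]
    exact mul_le_mul_of_nonneg_left (log_le_self (zero_le_one.trans ht.le)) (exp_pos _).le

theorem integral_exp_neg_mul_log : ∫ t in Ioi 0, exp (-t) * log t = -eulerMascheroniConstant := by
  have hIntegral := Complex.hasDerivAt_GammaIntegral (s := 1) one_pos
  simp only [sub_self, Complex.cpow_zero, one_mul, mul_comm (Complex.ofReal (log _)),
    ← Complex.ofReal_mul] at hIntegral
  have hcast : ∫ t in Ioi 0, ((exp (-t) * log t : ℝ) : ℂ)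
      = ((∫ t in Ioi 0, exp (-t) * log t : ℝ) : ℂ) := _root_.integral_ofReal
  rw [hcast] at hIntegral
  have hGamma : HasDerivAt Complex.Gamma
      ((∫ t in Ioi 0, exp (-t) * log t : ℝ) : ℂ) 1 := by
    refine hIntegral.congr_of_eventuallyEq ?_
    filter_upwards [(Complex.continuous_re.isOpen_preimage _ isOpen_Ioi).mem_nhds
      (show (1 : ℂ).re ∈ Ioi 0 by simp)] with s hs
    exact Complex.Gamma_eq_integral hs
  exact_mod_cast hGamma.unique Complex.hasDerivAt_Gamma_one

theorem hasDerivAt_one_sub_exp_neg (x : ℝ) :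
    HasDerivAt (fun s => 1 - exp (-s)) (exp (-x)) x := by
  simpa using ((hasDerivAt_neg x).exp).const_sub 1

theorem integral_Ioc_exp_neg_mul_log {a : ℝ} (ha : 0 < a) :
    ∫ s in Ioc 0 a, exp (-s) * log s = (1 - exp (-a)) * log a - Ein a := by
  set F : ℝ → ℝ := fun s => (1 - exp (-s)) * log s - Ein s
  have hF : ∀ x > 0, HasDerivAt F (exp (-x) * log x) x := fun x hx => by
    refine (((hasDerivAt_one_sub_exp_neg x).fun_mul (hasDerivAt_log hx.ne')).fun_sub
      (hasDerivAt_Ein hx)).congr_deriv ?_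
    field_simp
    ring
  have hF0 : Tendsto F (𝓝[>] 0) (𝓝 0) := by
    have hmul_log : Tendsto (fun s => (1 - exp (-s)) * log s) (𝓝[>] 0) (𝓝 0) := by
      refine squeeze_zero_norm' ?_ (by simpa using
        (continuous_mul_log.abs.tendsto 0).mono_left nhdsWithin_le_nhds)
      filter_upwards [self_mem_nhdsWithin] with s (hs : 0 < s)
      rw [norm_mul, norm_of_nonneg (one_sub_exp_neg_nonneg hs.le), abs_of_pos hs, norm_eq_abs]
      exact mul_le_mul_of_nonneg_right (one_sub_exp_neg_le s) (abs_nonneg _)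
    simpa using hmul_log.sub tendsto_Ein_nhdsGT_zero
  have hint : IntervalIntegrable (fun s => exp (-s) * log s) volume 0 a := by
    rw [intervalIntegrable_iff_integrableOn_Ioc_of_le ha.le]
    exact integrableOn_exp_neg_mul_log.mono_set Ioc_subset_Ioi_self
  have hFTC := integral_eq_sub_of_hasDerivAt_of_tendsto ha (fun x hx => hF x hx.1) hint hF0
    ((hF a ha).continuousAt.tendsto.mono_left nhdsWithin_le_nhds)
  rw [integral_of_le ha.le, sub_zero] at hFTC
  exact hFTC

theorem tendsto_exp_neg_mul_log_atTop : Tendsto (fun s => exp (-s) * log s) atTop (𝓝 0) := by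
  refine squeeze_zero_norm' ?_ (by simpa using tendsto_pow_mul_exp_neg_atTop_nhds_zero 1)
  filter_upwards [eventually_ge_atTop 1] with s hs
  rw [norm_mul, norm_of_nonneg (exp_pos _).le, norm_of_nonneg (log_nonneg hs), mul_comm]
  exact mul_le_mul_of_nonneg_right (log_le_self (zero_le_one.trans hs)) (exp_pos _).le

theorem integral_Ioi_exp_neg_mul_log {a : ℝ} (ha : 0 < a) :
    ∫ s in Ioi a, exp (-s) * log s = exp (-a) * log a + E₁ a := by
  have hF : ∀ x ∈ Ici a, HasDerivAt (fun s => -(exp (-s) * log s))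
      (exp (-x) * log x - exp (-x) / x) x := fun x hx => by
    have hx0 : 0 < x := ha.trans_le hx
    refine (((hasDerivAt_neg x).exp).fun_mul (hasDerivAt_log hx0.ne')).fun_neg.congr_deriv ?_
    field_simp
    ring
  have hlog := integrableOn_exp_neg_mul_log.mono_set (Ioi_subset_Ioi ha.le)
  have hFTC := integral_Ioi_of_hasDerivAt_of_tendsto' hF (hlog.sub (integrableOn_exp_neg_div ha))
    (by simpa using tendsto_exp_neg_mul_log_atTop.neg)
  rw [integral_sub hlog (integrableOn_exp_neg_div ha)] at hFTC
  rw [E₁]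
  linarith

theorem Ein_eq_eulerMascheroniConstant_add_log_add_E₁ {x : ℝ} (hx : 0 < x) :
    Ein x = eulerMascheroniConstant + log x + E₁ x := by
  have hsplit := setIntegral_union (Ioc_disjoint_Ioi le_rfl) measurableSet_Ioi
    (integrableOn_exp_neg_mul_log.mono_set Ioc_subset_Ioi_self)
    (integrableOn_exp_neg_mul_log.mono_set (Ioi_subset_Ioi hx.le))
  rw [Ioc_union_Ioi_eq_Ioi hx.le, integral_exp_neg_mul_log, integral_Ioc_exp_neg_mul_log hx,
    integral_Ioi_exp_neg_mul_log hx] at hsplit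
  linarith

theorem abs_intervalIntegral_le_log_sub_log {h : ℝ → ℝ} (hc : ContinuousOn h (Ioi 0))
    (h0 : ∀ t > 0, 0 ≤ h t) (hinv : ∀ t > 0, h t ≤ t⁻¹) {u a : ℝ} (hu : 0 < u) (hua : u ≤ a) :
    |∫ t in u..a, h t| ≤ log a - log u := by
  have hsub : uIcc u a ⊆ Ioi 0 := fun t ht =>
    hu.trans_le (by rw [uIcc_of_le hua] at ht; exact ht.1)
  rw [abs_of_nonneg (integral_nonneg hua fun t ht => h0 t (hu.trans_le ht.1)),
    ← log_div (hu.trans_le hua).ne' hu.ne', ← integral_inv_of_pos hu (hu.trans_le hua)]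
  exact integral_mono_on hua ((hc.mono hsub).intervalIntegrable)
    ((continuousOn_inv₀.mono fun t ht => (hsub ht).ne').intervalIntegrable)
    fun t ht => hinv t (hu.trans_le ht.1)

theorem integral_Ioo_intervalIntegral_eq {h : ℝ → ℝ} (hc : ContinuousOn h (Ioi 0))
    (h0 : ∀ t > 0, 0 ≤ h t) (hinv : ∀ t > 0, h t ≤ t⁻¹) {a : ℝ} (ha : 0 < a) :
    ∫ u in Ioo 0 a, ∫ t in u..a, h t = ∫ t in 0..a, t * h t := by
  set K : ℝ → ℝ := fun u => ∫ t in u..a, h t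
  have hK : ∀ u > 0, HasDerivAt K (-h u) u := fun u hu =>
    integral_hasDerivAt_left
      ((hc.mono fun t ht => lt_min hu ha |>.trans_le ht.1).intervalIntegrable)
      (hc.stronglyMeasurableAtFilter isOpen_Ioi u hu) (hc.continuousAt (Ioi_mem_nhds hu))
  have hmul_c : ContinuousOn (fun t => t * h t) (Ioi 0) := continuousOn_id.mul hc
  have hmul_le : ∀ t > 0, |t * h t| ≤ 1 := fun t ht => by
    rw [abs_of_nonneg (mul_nonneg ht.le (h0 t ht))]
    calc t * h t ≤ t * t⁻¹ := mul_le_mul_of_nonneg_left (hinv t ht) ht.le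
      _ = 1 := mul_inv_cancel₀ ht.ne'
  set F : ℝ → ℝ := fun u => u * K u + ∫ t in 0..u, t * h t
  have hF : ∀ u > 0, HasDerivAt F (K u) u := fun u hu => by
    refine (((hasDerivAt_id u).fun_mul (hK u hu)).fun_add
      (hasDerivAt_integral_zero_of_abs_le hmul_c hmul_le hu)).congr_deriv ?_
    simp only [id]
    ring
  have hF0 : Tendsto F (𝓝[>] 0) (𝓝 0) := by
    have hmul_K : Tendsto (fun u => u * K u) (𝓝[>] 0) (𝓝 0) := by
      have hcont : Continuous fun u => u * log a - u * log u := by fun_prop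
      refine squeeze_zero_norm' ?_ (by simpa using (hcont.tendsto 0).mono_left nhdsWithin_le_nhds)
      filter_upwards [Ioo_mem_nhdsGT ha] with u hu
      rw [norm_mul, norm_of_nonneg hu.1.le, norm_eq_abs, ← mul_sub]
      exact mul_le_mul_of_nonneg_left
        (abs_intervalIntegral_le_log_sub_log hc h0 hinv hu.1 hu.2.le) hu.1.le
    simpa using hmul_K.add (tendsto_integral_zero_of_abs_le hmul_le)
  have hKint : IntervalIntegrable K volume 0 a := by
    have hKc : ContinuousOn K (Ioi 0) := fun u hu => (hK u hu).continuousAt.continuousWithinAt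
    rw [intervalIntegrable_iff_integrableOn_Ioc_of_le ha.le]
    refine Integrable.mono' ((intervalIntegrable_const (c := log a)).sub intervalIntegrable_log').1
      ((hKc.mono Ioc_subset_Ioi_self).aestronglyMeasurable measurableSet_Ioc) ?_
    filter_upwards [ae_restrict_mem measurableSet_Ioc] with u hu
    exact abs_intervalIntegral_le_log_sub_log hc h0 hinv hu.1 hu.2
  have hFTC := integral_eq_sub_of_hasDerivAt_of_tendsto ha (fun u hu => hF u hu.1) hKint hF0
    ((hF a ha).continuousAt.tendsto.mono_left nhdsWithin_le_nhds)
  rw [← integral_Ioc_eq_integral_Ioo, ← integral_of_le ha.le, hFTC]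
  simp [F, K]

theorem image_mul_exp_neg_mul_Ioi {a μ : ℝ} (ha : 0 < a) (hμ : 0 < μ) :
    (fun τ => a * exp (-(μ * τ))) '' Ioi 0 = Ioo 0 a := by
  ext u
  constructor
  · rintro ⟨τ, hτ, rfl⟩
    have hμτ : -(μ * τ) < 0 := neg_neg_of_pos (mul_pos hμ hτ)
    exact ⟨by positivity, mul_lt_of_lt_one_right ha (exp_lt_one_iff.2 hμτ)⟩
  · rintro ⟨hu, hua⟩
    refine ⟨(log a - log u) / μ, div_pos (sub_pos.2 (log_lt_log hu hua)) hμ, ?_⟩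
    show a * exp (-(μ * ((log a - log u) / μ))) = u
    rw [mul_div_cancel₀ _ hμ.ne', neg_sub, exp_sub, exp_log hu, exp_log ha]
    field_simp

theorem integral_Ioi_comp_mul_exp_neg_mul {a μ : ℝ} (ha : 0 < a) (hμ : 0 < μ) (g : ℝ → ℝ) :
    ∫ τ in Ioi 0, g (a * exp (-(μ * τ))) * exp (-(μ * τ)) = (μ * a)⁻¹ * ∫ u in Ioo 0 a, g u := by
  have hderiv : ∀ τ ∈ Ioi (0 : ℝ), HasDerivWithinAt (fun τ => a * exp (-(μ * τ)))
      (-(μ * a * exp (-(μ * τ)))) (Ioi 0) τ := fun τ _ => by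
    refine (((hasDerivAt_id τ).const_mul μ).neg.exp.const_mul a).hasDerivWithinAt.congr_deriv ?_
    simp only [Pi.neg_apply, id]
    ring
  have hinj : InjOn (fun τ => a * exp (-(μ * τ))) (Ioi 0) := fun x _ y _ hxy => by
    simpa [ha.ne', hμ.ne'] using hxy
  rw [← image_mul_exp_neg_mul_Ioi ha hμ, ← MeasureTheory.integral_const_mul,
    integral_image_eq_integral_abs_deriv_smul measurableSet_Ioi hderiv hinj]
  refine setIntegral_congr_fun measurableSet_Ioi fun τ _ => ?_
  rw [abs_neg, abs_of_pos (by positivity), smul_eq_mul]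
  field_simp

theorem integral_Ioo_intervalIntegral_one_sub_exp_neg_div_sq {a : ℝ} (ha : 0 < a) :
    ∫ u in Ioo 0 a, ∫ t in u..a, (1 - exp (-t)) / t ^ 2 = Ein a := by
  have hc : ContinuousOn (fun t => (1 - exp (-t)) / t ^ 2) (Ioi 0) :=
    ContinuousOn.div (by fun_prop) (by fun_prop) fun t ht => pow_ne_zero 2 (ne_of_gt ht)
  have hinv : ∀ t > 0, (1 - exp (-t)) / t ^ 2 ≤ t⁻¹ := fun t ht =>
    calc (1 - exp (-t)) / t ^ 2 ≤ t / t ^ 2 := by gcongr; exact one_sub_exp_neg_le t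
      _ = t⁻¹ := by field_simp
  rw [integral_Ioo_intervalIntegral_eq hc
    (fun t ht => div_nonneg (one_sub_exp_neg_nonneg ht.le) (sq_nonneg t)) hinv ha, Ein]
  refine integral_congr fun t _ => ?_
  rcases eq_or_ne t 0 with rfl | ht
  · simp
  · field_simp

theorem explicit_R_formula_general (μ β₀ g₀ lam : ℝ)
    (hμ : 0 < μ) (hlam : 0 < lam) :
    β₀ * ∫ τ in Set.Ioi (0:ℝ),
        (∫ t in ((lam / μ) * Real.exp (-(μ * τ)))..(lam / μ),
          (1 - Real.exp (-t)) / t ^ 2) * (g₀ / μ) * Real.exp (-(μ * τ)) =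
      (β₀ * g₀ / (μ * lam)) *
        (Real.eulerMascheroniConstant + Real.log (lam / μ) +
          ∫ s in Set.Ioi (lam / μ), Real.exp (-s) / s) := by
  set a := lam / μ
  have ha : 0 < a := div_pos hlam hμ
  have hμa : μ * a = lam := mul_div_cancel₀ lam hμ.ne'
  calc β₀ * ∫ τ in Ioi 0, (∫ t in a * exp (-(μ * τ))..a, (1 - exp (-t)) / t ^ 2)
        * (g₀ / μ) * exp (-(μ * τ))
      = β₀ * (g₀ / μ) * ∫ τ in Ioi 0, (∫ t in a * exp (-(μ * τ))..a, (1 - exp (-t)) / t ^ 2)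
        * exp (-(μ * τ)) := by
        rw [mul_assoc, ← MeasureTheory.integral_const_mul (g₀ / μ)]
        congr 1
        exact integral_congr_ae (.of_forall fun τ => by ring)
    _ = β₀ * g₀ / (μ * lam) * Ein a := by
        rw [integral_Ioi_comp_mul_exp_neg_mul ha hμ fun u => ∫ t in u..a, (1 - exp (-t)) / t ^ 2,
          integral_Ioo_intervalIntegral_one_sub_exp_neg_div_sq ha, hμa]
        ring
    _ = _ := by rw [Ein_eq_eulerMascheroniConstant_add_log_add_E₁ ha, E₁]

/-- For `μ, β₀, g₀, λ > 0`,
`β₀ ∫_0^∞ (∫_{(λ/μ)e^{-μτ}}^{λ/μ} (1-e^{-t})/t² dt) (g₀/μ) e^{-μτ} dτ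
  = (β₀g₀/(μλ)) (γ_E + ln(λ/μ) + Γ(0,λ/μ))`,
where `γ_E` is the Euler–Mascheroni constant and `Γ(0,x) = ∫_x^∞ e^{-s}/s ds`. -/
theorem explicit_R_formula (μ β₀ g₀ lam : ℝ)
    (hμ : 0 < μ) (hβ₀ : 0 < β₀) (hg₀ : 0 < g₀) (hlam : 0 < lam) :
    β₀ * ∫ τ in Set.Ioi (0:ℝ),
        (∫ t in ((lam / μ) * Real.exp (-(μ * τ)))..(lam / μ),
          (1 - Real.exp (-t)) / t ^ 2) * (g₀ / μ) * Real.exp (-(μ * τ)) =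
      (β₀ * g₀ / (μ * lam)) *
        (Real.eulerMascheroniConstant + Real.log (lam / μ) +
          ∫ s in Set.Ioi (lam / μ), Real.exp (-s) / s) :=
  explicit_R_formula_general μ β₀ g₀ lam hμ hlam
end
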